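/- Let ω be a semi-selforthogonal subcategory of a triangulated category T, and suppose every object X ∈ ω̌ of the class check(add ω) admits a triangle X → M_X → X' → X[1] with M_X ∈ add ω and X' ∈ ω̌. Then every morphism f : X → Y with X ∈ ω̌ and Y ∈ ωX factors through an object of add ω. -/

import Mathlib

open CategoryTheory Category Limits Pretriangulated

universe v u

namespace RelSing

variable {C : Type u} [Category.{v} C] [Preadditive C] [HasZeroObject C]
  [HasShift C ℤ] [∀ n : ℤ, (shiftFunctor C n).Additive] [Pretriangulated C]

/-- `ω` is semi-selforthogonal (presilting): `Hom(M, M'[i]) = 0` for `M, M' ∈ ω`, `i > 0`. -/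
def SemiSelfOrth (ω : Set C) : Prop :=
  ∀ M ∈ ω, ∀ M' ∈ ω, ∀ i : ℤ, 0 < i → ∀ f : M ⟶ M'⟦i⟧, f = 0

/-- `add ω`: closure of `ω` under zero objects, finite direct sums (expressed via
biproduct data) and direct summands (retracts). -/
inductive AddCat (ω : Set C) : C → Prop
  | of {X : C} (hX : X ∈ ω) : AddCat ω X
  | zero {X : C} (hX : IsZero X) : AddCat ω X
  | sum {X Y Z : C} (i₁ : X ⟶ Z) (i₂ : Y ⟶ Z) (p₁ : Z ⟶ X) (p₂ : Z ⟶ Y)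
      (h₁ : i₁ ≫ p₁ = 𝟙 X) (h₂ : i₂ ≫ p₂ = 𝟙 Y) (h₁₂ : i₁ ≫ p₂ = 0) (h₂₁ : i₂ ≫ p₁ = 0)
      (hZ : p₁ ≫ i₁ + p₂ ≫ i₂ = 𝟙 Z) (hX : AddCat ω X) (hY : AddCat ω Y) : AddCat ω Z
  | retract {X Y : C} (i : X ⟶ Y) (r : Y ⟶ X) (hir : i ≫ r = 𝟙 X) (hY : AddCat ω Y) :
      AddCat ω X

/-- The left orthogonal `⊥ω`. -/
def leftPerp (ω : Set C) : Set C :=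
  {N | ∀ M ∈ ω, ∀ i : ℤ, 0 < i → ∀ f : N ⟶ M⟦i⟧, f = 0}

/-- The right orthogonal `ω⊥`. -/
def rightPerp (ω : Set C) : Set C :=
  {N | ∀ M ∈ ω, ∀ i : ℤ, 0 < i → ∀ f : M ⟶ N⟦i⟧, f = 0}

/-- The Auslander class `X_ω`: objects `T₀` with triangles `T_i → M_i → T_{i+1} → T_i[1]`
for all `i ≥ 0`, `M_i ∈ add ω`, `T_i ∈ ⊥ω`. -/
def Auslander (ω : Set C) : Set C :=
  {X | ∃ (T : ℕ → C) (M : ℕ → C) (f : ∀ i, T i ⟶ M i) (g : ∀ i, M i ⟶ T (i + 1))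
      (h : ∀ i, T (i + 1) ⟶ (T i)⟦(1 : ℤ)⟧),
    T 0 = X ∧ (∀ i, Triangle.mk (f i) (g i) (h i) ∈ distTriang C) ∧
      (∀ i, AddCat ω (M i)) ∧ (∀ i, T i ∈ leftPerp ω)}

/-- The co-Auslander class `ωX`: objects `T₀` with triangles `T_{i+1} → M_i → T_i → T_{i+1}[1]`
for all `i ≥ 0`, `M_i ∈ add ω`, `T_i ∈ ω⊥`. -/
def coAuslander (ω : Set C) : Set C :=
  {X | ∃ (T : ℕ → C) (M : ℕ → C) (f : ∀ i, T (i + 1) ⟶ M i) (g : ∀ i, M i ⟶ T i)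
      (h : ∀ i, T i ⟶ (T (i + 1))⟦(1 : ℤ)⟧),
    T 0 = X ∧ (∀ i, Triangle.mk (f i) (g i) (h i) ∈ distTriang C) ∧
      (∀ i, AddCat ω (M i)) ∧ (∀ i, T i ∈ rightPerp ω)}

/-- `check S` (`S̬`): objects `X₀` with triangles `X_i → C_i → X_{i+1} → X_i[1]` for
`0 ≤ i ≤ r`, `C_i ∈ S`, `X_{r+1} = 0`. -/
def CheckClass (S : Set C) : Set C :=
  {X | ∃ (r : ℕ) (T : ℕ → C) (M : ℕ → C) (f : ∀ i, T i ⟶ M i) (g : ∀ i, M i ⟶ T (i + 1))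
      (h : ∀ i, T (i + 1) ⟶ (T i)⟦(1 : ℤ)⟧),
    T 0 = X ∧ IsZero (T (r + 1)) ∧ (∀ i ≤ r, Triangle.mk (f i) (g i) (h i) ∈ distTriang C) ∧
      (∀ i ≤ r, M i ∈ S)}

/-- `hat S` (`Ŝ`): objects `X₀` with triangles `X_{i+1} → C_i → X_i → X_{i+1}[1]` for
`0 ≤ i ≤ r`, `C_i ∈ S`, `X_{r+1} = 0`. -/
def HatClass (S : Set C) : Set C :=
  {X | ∃ (r : ℕ) (T : ℕ → C) (M : ℕ → C) (f : ∀ i, T (i + 1) ⟶ M i) (g : ∀ i, M i ⟶ T i)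
      (h : ∀ i, T i ⟶ (T (i + 1))⟦(1 : ℤ)⟧),
    T 0 = X ∧ IsZero (T (r + 1)) ∧ (∀ i ≤ r, Triangle.mk (f i) (g i) (h i) ∈ distTriang C) ∧
      (∀ i ≤ r, M i ∈ S)}

/-- A (strictly full) triangulated subcategory, as a predicate on sets of objects. -/
structure IsTriangulatedSub (S : Set C) : Prop where
  zero : ∀ X : C, IsZero X → X ∈ S
  iso : ∀ {X Y : C}, (X ≅ Y) → X ∈ S → Y ∈ S
  shift : ∀ X ∈ S, ∀ n : ℤ, X⟦n⟧ ∈ S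
  ext₂ : ∀ T ∈ distTriang C, T.obj₁ ∈ S → T.obj₃ ∈ S → T.obj₂ ∈ S

/-- `⟨S⟩`: the smallest triangulated subcategory containing `S`. -/
def genTriang (S : Set C) : Set C :=
  ⋂₀ {U : Set C | S ⊆ U ∧ IsTriangulatedSub U}

/-- `S[+] = {X | X ≅ C[n], C ∈ S, n ≥ 0}`. -/
def plusClass (S : Set C) : Set C :=
  {X | ∃ Y ∈ S, ∃ n : ℕ, Nonempty (X ≅ Y⟦(n : ℤ)⟧)}

/-- `S[-] = {X | X ≅ C[n], C ∈ S, n ≤ 0}`. -/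
def minusClass (S : Set C) : Set C :=
  {X | ∃ Y ∈ S, ∃ n : ℕ, Nonempty (X ≅ Y⟦(-(n : ℤ))⟧)}

/-- `f` factors through an object of `add ω`. -/
def FactorsThruAdd (ω : Set C) {X Y : C} (f : X ⟶ Y) : Prop :=
  ∃ (M : C) (g : X ⟶ M) (h : M ⟶ Y), AddCat ω M ∧ g ≫ h = f

/-- The `ω`-Gorenstein objects: `G_ω = ωX ∩ X_ω`. -/
def Gor (ω : Set C) : Set C := coAuslander ω ∩ Auslander ω


end RelSing

open RelSing

variable {C : Type u} [Category.{v} C] [Preadditive C] [HasZeroObject C]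
  [HasShift C ℤ] [∀ n : ℤ, (shiftFunctor C n).Additive] [Pretriangulated C]

/-!
In the triangle `X → M → X' → X⟦1⟧`, the map `f : X ⟶ Y` extends along `X → M` as soon as
`X' → X⟦1⟧ → Y⟦1⟧` vanishes, so it suffices that `Hom(X', Y⟦1⟧) = 0`. Since `Y ∈ ωX` lies in
`ω⊥`, the objects `N` with `Hom(N, Y⟦i⟧) = 0` for all `i > 0` include `ω`; they are closed under
zero objects, sums and summands, and under extensions `N → M → N' → N⟦1⟧` (testing `N'` at
`i + 1`), so they include all of `check(add ω)`.
-/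

namespace RelSing

section

variable {D : Type*} [Category D] [Preadditive D] [HasShift D ℤ]

lemma mem_leftPerp_of_isZero {X : D} (hX : IsZero X) (U : Set D) : X ∈ leftPerp U :=
  fun _ _ _ _ f => hX.eq_of_src f 0

lemma setOf_addCat_subset_leftPerp {ω U : Set D} (h : ω ⊆ leftPerp U) :
    {A | AddCat ω A} ⊆ leftPerp U := by
  intro M hM
  induction hM with
  | of hX => exact h hX
  | zero hX => exact mem_leftPerp_of_isZero hX U
  | sum i₁ i₂ p₁ p₂ _ _ _ _ hZ _ _ ih₁ ih₂ =>
      intro Y hY i hi f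
      rw [← id_comp f, ← hZ, Preadditive.add_comp, assoc, assoc, ih₁ Y hY i hi (i₁ ≫ f),
        ih₂ Y hY i hi (i₂ ≫ f), comp_zero, comp_zero, add_zero]
  | retract s r hsr _ ih =>
      intro Y hY i hi f
      rw [← id_comp f, ← hsr, assoc, ih Y hY i hi (r ≫ f), comp_zero]

lemma subset_leftPerp_singleton {ω : Set D} {Y : D} (hY : Y ∈ rightPerp ω) :
    ω ⊆ leftPerp {Y} := by
  rintro M hM _ rfl
  exact hY M hM

end

lemma Triangle.yoneda_exact₁ (T : Triangle C) (hT : T ∈ distTriang C) {Y : C} (f : T.obj₁ ⟶ Y)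
    (hf : T.mor₃ ≫ f⟦(1 : ℤ)⟧' = 0) : ∃ g : T.obj₂ ⟶ Y, f = T.mor₁ ≫ g := by
  obtain ⟨g, hg⟩ := T.rotate.yoneda_exact₃ (rot_of_distTriang _ hT) (f⟦(1 : ℤ)⟧') hf
  obtain ⟨g', rfl⟩ : ∃ g' : T.obj₂ ⟶ Y, g'⟦(1 : ℤ)⟧' = g :=
    (shiftFunctor C (1 : ℤ)).map_surjective g
  refine ⟨-g', (shiftFunctor C (1 : ℤ)).map_injective ?_⟩
  rw [Functor.map_comp, Functor.map_neg, Preadditive.comp_neg, ← Preadditive.neg_comp]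
  exact hg

lemma mem_leftPerp_of_distTriang {U : Set C} (T : Triangle C) (hT : T ∈ distTriang C)
    (h₂ : T.obj₂ ∈ leftPerp U) (h₃ : T.obj₃ ∈ leftPerp U) : T.obj₁ ∈ leftPerp U := by
  intro Y hY i hi u
  have hu : T.mor₃ ≫ u⟦(1 : ℤ)⟧' = 0 := by
    rw [← cancel_mono ((shiftFunctorAdd' C i 1 (i + 1) rfl).inv.app Y), zero_comp]
    exact h₃ Y hY (i + 1) (by omega) _
  obtain ⟨g, rfl⟩ := Triangle.yoneda_exact₁ T hT u hu
  rw [h₂ Y hY i hi g, comp_zero]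

lemma checkClass_subset_leftPerp {S U : Set C} (h : S ⊆ leftPerp U) :
    CheckClass S ⊆ leftPerp U := by
  rintro X ⟨r, T, M, _, _, _, rfl, hzero, hdist, hM⟩
  exact Nat.decreasingInduction (motive := fun j _ => T j ∈ leftPerp U)
    (fun j hj hsucc => mem_leftPerp_of_distTriang _ (hdist j (by omega))
      (h (hM j (by omega))) hsucc)
    (mem_leftPerp_of_isZero hzero U) (Nat.zero_le (r + 1))

lemma coAuslander_subset_rightPerp (ω : Set C) : coAuslander ω ⊆ rightPerp ω := by
  rintro _ ⟨T, _, _, _, _, rfl, _, _, hT⟩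
  exact hT 0

end RelSing

theorem stmt11_general (ω : Set C)
    (htri : ∀ X ∈ CheckClass {A | AddCat ω A},
      ∃ (M X' : C) (a : X ⟶ M) (b : M ⟶ X') (c : X' ⟶ X⟦(1 : ℤ)⟧),
        Triangle.mk a b c ∈ (distTriang C) ∧ AddCat ω M ∧
        X' ∈ CheckClass {A | AddCat ω A})
    {X Y : C} (hX : X ∈ CheckClass {A | AddCat ω A}) (hY : Y ∈ coAuslander ω)
    (f : X ⟶ Y) :
    FactorsThruAdd ω f := by
  obtain ⟨M, X', a, b, c, hdist, hM, hX'⟩ := htri X hX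
  have hX'Y : X' ∈ leftPerp {Y} :=
    checkClass_subset_leftPerp (setOf_addCat_subset_leftPerp
      (subset_leftPerp_singleton (coAuslander_subset_rightPerp ω hY))) hX'
  obtain ⟨g, hg⟩ := Triangle.yoneda_exact₁ _ hdist f (hX'Y Y rfl 1 one_pos _)
  exact ⟨M, a, g, hM, hg.symm⟩

/-- For a semi-selforthogonal `ω`, if every `X ∈ check(add ω)` admits a triangle
`X → M_X → X' → X[1]` with `M_X ∈ add ω` and `X' ∈ check(add ω)`, then every
morphism `f : X ⟶ Y` with `X ∈ check(add ω)` and `Y ∈ ωX` factors through an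
object of `add ω`. -/
theorem stmt11 (ω : Set C) (hω : SemiSelfOrth ω)
    (htri : ∀ X ∈ CheckClass {A | AddCat ω A},
      ∃ (M X' : C) (a : X ⟶ M) (b : M ⟶ X') (c : X' ⟶ X⟦(1 : ℤ)⟧),
        Triangle.mk a b c ∈ (distTriang C) ∧ AddCat ω M ∧
        X' ∈ CheckClass {A | AddCat ω A})
    {X Y : C} (hX : X ∈ CheckClass {A | AddCat ω A}) (hY : Y ∈ coAuslander ω)
    (f : X ⟶ Y) :
    FactorsThruAdd ω f :=
  stmt11_general ω htri hX hY f
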